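/- For the standard normal CDF Φ and any μ > 0, the tail ratio Φ̄(t - μ)/Φ̄(t) → ∞ as t → ∞, where Φ̄ = 1 - Φ. Hence the Gaussian noise-addition mechanism does not have bounded relative disclosure risk. -/

import Mathlib

/-!
The density of `N(μ, 1)` is the standard Gaussian density times the likelihood ratio
`exp (μ x - μ ^ 2 / 2)`, which is increasing in `x`. On the tail `x > t` it is at least
`exp (μ t - μ ^ 2 / 2)`, so `Φ̄(t - μ) ≥ exp (μ t - μ ^ 2 / 2) Φ̄(t)`, and the right side grows
without bound relative to `Φ̄(t)`.
-/

open Set Filter Real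

/-- The standard normal cumulative distribution function. -/
noncomputable def stdNormalCDF (t : ℝ) : ℝ :=
  ∫ x in Set.Iic t, (Real.sqrt (2 * Real.pi))⁻¹ * Real.exp (-(x ^ 2) / 2)

open MeasureTheory ProbabilityTheory

lemma setIntegral_Ioi_comp_sub_right {E : Type*} [NormedAddCommGroup E] [NormedSpace ℝ E]
    (f : ℝ → E) (t μ : ℝ) :
    ∫ x in Ioi t, f (x - μ) = ∫ x in Ioi (t - μ), f x := by
  simpa using (measurePreserving_sub_right volume μ).setIntegral_preimage_emb
    (measurableEmbedding_subRight μ) f (Ioi (t - μ))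

lemma mul_setIntegral_Ioi_le_setIntegral_Ioi_sub {f : ℝ → ℝ} (hf : Integrable f) {t μ c : ℝ}
    (h : ∀ x > t, c * f x ≤ f (x - μ)) :
    c * ∫ x in Ioi t, f x ≤ ∫ x in Ioi (t - μ), f x := by
  rw [← setIntegral_Ioi_comp_sub_right, ← integral_const_mul]
  exact setIntegral_mono_on (hf.const_mul c).integrableOn (hf.comp_sub_right μ).integrableOn
    measurableSet_Ioi h

lemma gaussianPDFReal_sub_eq_exp_mul (m : ℝ) (v : NNReal) (x μ : ℝ) :
    gaussianPDFReal m v (x - μ) = exp ((μ * (x - m) - μ ^ 2 / 2) / v) * gaussianPDFReal m v x := by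
  rcases eq_or_ne v 0 with rfl | hv
  · simp
  simp only [gaussianPDFReal]
  rw [mul_left_comm, ← exp_add]
  congr 3
  field_simp
  ring

lemma stdNormalCDF_eq_setIntegral_gaussianPDFReal (t : ℝ) :
    stdNormalCDF t = ∫ x in Iic t, gaussianPDFReal 0 1 x := by
  simp [stdNormalCDF, gaussianPDFReal]

lemma one_sub_stdNormalCDF (t : ℝ) :
    1 - stdNormalCDF t = ∫ x in Ioi t, gaussianPDFReal 0 1 x := by
  have hint := integrable_gaussianPDFReal 0 1
  rw [← integral_gaussianPDFReal_eq_one 0 one_ne_zero, stdNormalCDF_eq_setIntegral_gaussianPDFReal,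
    ← intervalIntegral.integral_Iic_add_Ioi hint.integrableOn hint.integrableOn, add_sub_cancel_left]

lemma one_sub_stdNormalCDF_pos (t : ℝ) : 0 < 1 - stdNormalCDF t := by
  rw [one_sub_stdNormalCDF, setIntegral_pos_iff_support_of_nonneg_ae
    (.of_forall fun x => (gaussianPDFReal_pos 0 1 x one_ne_zero).le)
    (integrable_gaussianPDFReal 0 1).integrableOn]
  have : Function.support (gaussianPDFReal 0 1) = univ :=
    Function.support_eq_univ fun x => (gaussianPDFReal_pos 0 1 x one_ne_zero).ne'
  simp [this]

lemma exp_le_one_sub_stdNormalCDF_sub_div {μ : ℝ} (hμ : 0 ≤ μ) (t : ℝ) :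
    exp (μ * t - μ ^ 2 / 2) ≤ (1 - stdNormalCDF (t - μ)) / (1 - stdNormalCDF t) := by
  rw [le_div_iff₀ (one_sub_stdNormalCDF_pos t), one_sub_stdNormalCDF, one_sub_stdNormalCDF]
  refine mul_setIntegral_Ioi_le_setIntegral_Ioi_sub (integrable_gaussianPDFReal 0 1) fun x hx => ?_
  rw [gaussianPDFReal_sub_eq_exp_mul]
  gcongr
  · exact (gaussianPDFReal_pos 0 1 x one_ne_zero).le
  · simp only [sub_zero, NNReal.coe_one, div_one]
    nlinarith

/-- for the standard normal CDF Φ and any μ > 0, the tail ratio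
Φ̄(t-μ)/Φ̄(t) tends to infinity as t → ∞. -/
theorem gaussian_tail_ratio_tendsto_atTop
    (μ : ℝ) (hμ : 0 < μ) :
    Tendsto (fun t : ℝ => (1 - stdNormalCDF (t - μ)) / (1 - stdNormalCDF t))
      atTop atTop := by
  have hexp : Tendsto (fun t => exp (μ * t - μ ^ 2 / 2)) atTop atTop :=
    tendsto_exp_atTop.comp <| tendsto_atTop_add_const_right _ _ <| tendsto_id.const_mul_atTop hμ
  exact tendsto_atTop_mono (exp_le_one_sub_stdNormalCDF_sub_div hμ.le) hexp
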